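/- Let A be a nonnegative primitive tensor of order m and dimension n ≥ 2. Then there exist j ∈ [n] and an integer l with 1 ≤ l ≤ n−1 such that M(A^l)_{jj} > 0. -/

import Mathlib

open Finset

/- An order-`m` dimension-`n` nonnegative tensor is encoded as
`A : Fin n → (Fin (m-1) → Fin n) → ℝ`, with `A i t = a_{i t₁ ⋯ t_{m-1}}`. -/

/-- The majorization matrix `M(A)_{ij} = a_{ij⋯j}`. -/
def maj (n m : ℕ) (A : Fin n → (Fin (m-1) → Fin n) → ℝ) :
    Matrix (Fin n) (Fin n) ℝ :=
  fun i j => A i (fun _ => j)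

/-- The majorization matrices of the Shao-product powers of `A`:
`majPow n m A k = M(A^k)`, via the recursion
`M(A^{k+1})_{uj} = Σ_{j₂,…,j_m} a_{u j₂ ⋯ j_m} M(A^k)_{j₂ j} ⋯ M(A^k)_{j_m j}`
(with `M(A^0)` the identity, so that `majPow n m A 1 = maj n m A`). -/
def majPow (n m : ℕ) (A : Fin n → (Fin (m-1) → Fin n) → ℝ) :
    ℕ → Matrix (Fin n) (Fin n) ℝ
  | 0 => 1
  | k + 1 => fun u j =>
      ∑ t : Fin (m-1) → Fin n, A u t * ∏ i, majPow n m A k (t i) j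

/-- `A` is primitive: `M(A^r) > 0` entrywise for some positive `r`. -/
def Primitive (n m : ℕ) (A : Fin n → (Fin (m-1) → Fin n) → ℝ) : Prop :=
  ∃ r, 0 < r ∧ ∀ u j, 0 < majPow n m A r u j

/-!
Let `G` be the digraph with an edge `v → u` when `M(A)_{uv} > 0`. Following the first index of
a positive term of `M(A^{k+1})_{vv}` down to `M(A)` shows that every vertex has an out-neighbour
`g v`, and walks in `G` give positive entries of the powers. If there were no closed walk of
length `1, …, n-1`, pigeonhole on the `g`-orbits would make `g` a single `n`-cycle, and any other
edge would close a walk that is too short; so `g v` is the only out-neighbour of `v`. But then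
the `t` in a positive term of `M(A^{k+1})_{uv}` can only be constant, so column `v` of `M(A^k)`
is positive only in row `g^[k] v`, contradicting primitivity since `n ≥ 2`.
-/

section MajPow

variable {n m : ℕ} {A : Fin n → (Fin (m-1) → Fin n) → ℝ}

lemma majPow_succ_apply (k : ℕ) (u j : Fin n) :
    majPow n m A (k+1) u j = ∑ t : Fin (m-1) → Fin n, A u t * ∏ i, majPow n m A k (t i) j :=
  rfl

lemma majPow_nonneg (hA : ∀ u t, 0 ≤ A u t) (k : ℕ) (u j : Fin n) :
    0 ≤ majPow n m A k u j := by
  induction k generalizing u with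
  | zero => exact Matrix.zero_le_one_elem u j
  | succ k ih =>
    exact sum_nonneg fun t _ => mul_nonneg (hA u t) (prod_nonneg fun i _ => ih (t i))

lemma majPow_zero : majPow n m A 0 = 1 :=
  rfl

lemma majPow_one : majPow n m A 1 = maj n m A := by
  ext u j
  rw [majPow_succ_apply, Fintype.sum_eq_single (fun _ => j)]
  · simp [majPow, maj]
  · intro t ht
    obtain ⟨i, hi⟩ := Function.ne_iff.mp ht
    rw [prod_eq_zero (mem_univ i) (Matrix.one_apply_ne hi : majPow n m A 0 (t i) j = 0), mul_zero]

lemma eq_of_majPow_zero_pos {u v : Fin n} (h : 0 < majPow n m A 0 u v) : u = v := by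
  by_contra huv
  rw [majPow_zero, Matrix.one_apply_ne huv] at h
  exact h.false

lemma majPow_succ_pos_iff (hA : ∀ u t, 0 ≤ A u t) {k : ℕ} {u j : Fin n} :
    0 < majPow n m A (k+1) u j ↔ ∃ t, 0 < A u t ∧ ∀ i, 0 < majPow n m A k (t i) j := by
  have hterm (t : Fin (m-1) → Fin n) : 0 ≤ A u t * ∏ i, majPow n m A k (t i) j :=
    mul_nonneg (hA u t) (prod_nonneg fun i _ => majPow_nonneg hA k _ j)
  rw [majPow_succ_apply, sum_pos_iff_of_nonneg fun t _ => hterm t]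
  constructor
  · rintro ⟨t, -, ht⟩
    refine ⟨t, (hA u t).lt_of_ne fun h0 => ?_,
      fun i => (majPow_nonneg hA k _ j).lt_of_ne fun h0 => ?_⟩
    · simp [← h0] at ht
    · exact ht.ne' (by rw [prod_eq_zero (mem_univ i) h0.symm, mul_zero])
  · rintro ⟨t, hAt, ht⟩
    exact ⟨t, mem_univ t, mul_pos hAt (prod_pos fun i _ => ht i)⟩

lemma majPow_add_pos (hA : ∀ u t, 0 ≤ A u t) {a b : ℕ} {u v j : Fin n}
    (h₁ : 0 < majPow n m A a u v) (h₂ : 0 < majPow n m A b v j) :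
    0 < majPow n m A (a + b) u j := by
  induction a generalizing u with
  | zero => rwa [eq_of_majPow_zero_pos h₁, zero_add]
  | succ a ih =>
    obtain ⟨t, hAt, ht⟩ := (majPow_succ_pos_iff hA).mp h₁
    rw [Nat.add_right_comm, majPow_succ_pos_iff hA]
    exact ⟨t, hAt, fun i => ih (ht i)⟩

lemma exists_maj_pos_of_majPow_pos (hA : ∀ u t, 0 ≤ A u t) (hm : 2 ≤ m) {k : ℕ} (hk : 0 < k)
    {u j : Fin n} (h : 0 < majPow n m A k u j) : ∃ v, 0 < maj n m A v j := by
  induction k generalizing u with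
  | zero => exact absurd hk (lt_irrefl 0)
  | succ k ih =>
    rcases k.eq_zero_or_pos with rfl | hk
    · exact ⟨u, by rwa [← majPow_one]⟩
    · obtain ⟨t, -, ht⟩ := (majPow_succ_pos_iff hA).mp h
      exact ih hk (ht ⟨0, by omega⟩)

lemma majPow_iterate_pos (hA : ∀ u t, 0 ≤ A u t) {g : Fin n → Fin n}
    (hg : ∀ v, 0 < maj n m A (g v) v) (k : ℕ) (v : Fin n) :
    0 < majPow n m A k (g^[k] v) v := by
  induction k with
  | zero => simp [majPow_zero]
  | succ k ih =>
    have hstep : 0 < majPow n m A 1 (g^[k+1] v) (g^[k] v) := by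
      rw [majPow_one, Function.iterate_succ_apply']
      exact hg _
    simpa [add_comm] using majPow_add_pos hA hstep ih

lemma eq_iterate_of_majPow_pos (hA : ∀ u t, 0 ≤ A u t) {g : Fin n → Fin n}
    (hg : ∀ u v, 0 < maj n m A u v → u = g v) {k : ℕ} {u v : Fin n}
    (h : 0 < majPow n m A k u v) : u = g^[k] v := by
  induction k generalizing u with
  | zero => exact eq_of_majPow_zero_pos h
  | succ k ih =>
    obtain ⟨t, hAt, ht⟩ := (majPow_succ_pos_iff hA).mp h
    obtain rfl : t = fun _ => g^[k] v := funext fun i => ih (ht i)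
    rw [Function.iterate_succ_apply']
    exact hg u _ hAt

end MajPow

section Aperiodic

variable {α : Type*} [Fintype α] {g : α → α}

lemma iterate_ne_iterate_of_lt (hg : ∀ x d, 0 < d → d < Fintype.card α → g^[d] x ≠ x)
    (x : α) {a b : ℕ} (hab : a < b) (hb : b < Fintype.card α) : g^[a] x ≠ g^[b] x := by
  intro h
  refine hg (g^[a] x) (b - a) (by omega) (by omega) ?_
  rw [← Function.iterate_add_apply, Nat.sub_add_cancel hab.le, h]

lemma iterate_card_eq_self (hg : ∀ x d, 0 < d → d < Fintype.card α → g^[d] x ≠ x)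
    (x : α) : g^[Fintype.card α] x = x := by
  obtain ⟨a, b, hab, h⟩ := Fintype.exists_ne_map_eq_of_card_lt
    (fun i : Fin (Fintype.card α + 1) => g^[i] x) (by simp)
  wlog hlt : a < b generalizing a b
  · exact this b a hab.symm h.symm (lt_of_le_of_ne (not_lt.mp hlt) (Ne.symm hab))
  have hd : b - a = Fintype.card α := by
    by_contra hd
    refine hg (g^[a] x) (b - a) (by omega) (by omega) ?_
    rw [← Function.iterate_add_apply, Nat.sub_add_cancel hlt.le, h]
  obtain ⟨ha, hb⟩ : (a : ℕ) = 0 ∧ (b : ℕ) = Fintype.card α := by omega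
  simpa [ha, hb] using h.symm

lemma exists_lt_card_iterate_eq (hg : ∀ x d, 0 < d → d < Fintype.card α → g^[d] x ≠ x)
    (x y : α) : ∃ s < Fintype.card α, g^[s] x = y := by
  have hinj : Function.Injective fun s : Fin (Fintype.card α) => g^[s] x := fun a b h => by
    by_contra hab
    rcases lt_or_gt_of_ne (Fin.val_ne_of_ne hab) with hlt | hlt
    · exact iterate_ne_iterate_of_lt hg x hlt b.isLt h
    · exact iterate_ne_iterate_of_lt hg x hlt a.isLt h.symm
  obtain ⟨s, hs⟩ := ((Fintype.bijective_iff_injective_and_card _).mpr ⟨hinj, by simp⟩).2 y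
  exact ⟨s, s.isLt, hs⟩

end Aperiodic

section NoShortCycle

variable {n m : ℕ} {A : Fin n → (Fin (m-1) → Fin n) → ℝ} {g : Fin n → Fin n}

lemma iterate_ne_self_of_no_short_cycle (hA : ∀ u t, 0 ≤ A u t)
    (hcyc : ∀ j l, 1 ≤ l → l ≤ n - 1 → majPow n m A l j j ≤ 0)
    (hg : ∀ v, 0 < maj n m A (g v) v) (x : Fin n) (d : ℕ) (hd₀ : 0 < d)
    (hd : d < Fintype.card (Fin n)) : g^[d] x ≠ x := by
  intro hx
  have hclosed := majPow_iterate_pos hA hg d x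
  rw [hx] at hclosed
  exact (hcyc x d hd₀ (by simp at hd; omega)).not_gt hclosed

lemma eq_of_maj_pos_of_no_short_cycle (hA : ∀ u t, 0 ≤ A u t)
    (hcyc : ∀ j l, 1 ≤ l → l ≤ n - 1 → majPow n m A l j j ≤ 0)
    (hg : ∀ v, 0 < maj n m A (g v) v) {u v : Fin n} (huv : 0 < maj n m A u v) : u = g v := by
  have hper := iterate_ne_self_of_no_short_cycle hA hcyc hg
  obtain ⟨s, hs_lt, rfl⟩ := exists_lt_card_iterate_eq hper u v
  -- the edge `v → u` and the `g`-walk from `u` back to `v` form a closed walk of length `s + 1`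
  have hclosed : 0 < majPow n m A (s + 1) (g^[s] u) (g^[s] u) :=
    majPow_add_pos hA (majPow_iterate_pos hA hg s u) (by rwa [majPow_one])
  have hs : s + 1 = Fintype.card (Fin n) := by
    by_contra hs
    simp only [Fintype.card_fin] at hs hs_lt
    exact (hcyc _ _ (by omega) (by omega)).not_gt hclosed
  rw [← Function.iterate_succ_apply' g, Nat.succ_eq_add_one, hs, iterate_card_eq_self hper]

end NoShortCycle

/-- a primitive tensor has `M(A^l)_{jj} > 0` for some `j` and some
`1 ≤ l ≤ n-1`. -/
theorem stmt_10 (n m : ℕ) (hm : 2 ≤ m) (hn : 2 ≤ n)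
    (A : Fin n → (Fin (m-1) → Fin n) → ℝ) (hA : ∀ u t, 0 ≤ A u t)
    (hprim : Primitive n m A) :
    ∃ (j : Fin n) (l : ℕ), 1 ≤ l ∧ l ≤ n - 1 ∧ 0 < majPow n m A l j j := by
  obtain ⟨r, hr, hpos⟩ := hprim
  by_contra hcyc
  push Not at hcyc
  choose g hg using fun v => exists_maj_pos_of_majPow_pos hA hm hr (hpos v v)
  have hunique : ∀ u v, 0 < maj n m A u v → u = g v := fun _ _ =>
    eq_of_maj_pos_of_no_short_cycle hA hcyc hg
  have h₀ := eq_iterate_of_majPow_pos hA hunique (hpos ⟨0, by omega⟩ ⟨0, by omega⟩)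
  have h₁ := eq_iterate_of_majPow_pos hA hunique (hpos ⟨1, by omega⟩ ⟨0, by omega⟩)
  exact absurd (h₀.trans h₁.symm) (by simp)
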